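/- Under union monotonic dir_Δ functions, the dependency-graph construction for an eGDN G with initially modified slots S_i either terminates without aborting for every possible queue ordering, or aborts for every possible queue ordering. -/

import Mathlib

/-- A state of the dependency-graph construction: the queue of operation nodes,
the recorded sets `C[o]` of input slots with potentially unhandled deltas, and
the edge set of the trigger graph `G_T`. -/
structure CState (O S : Type*) where
  queue : List O
  C : O → Set S
  edges : Set (O × O)

section

variable {O S : Type*} (inS outS : O → Set S)

/-- An operation node `o` is adjacent to the slot set `X`. -/
def Adjacent (X : Set S) (o : O) : Prop :=
  ((inS o ∪ outS o) ∩ X).Nonempty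

/-- Initial state for the set `Si` of initially modified slots: the queue
enumerates (without repetition) exactly the operation nodes adjacent to `Si`,
`C[o] = Si ∩ in(o)` for all nodes adjacent to `Si` (and in particular for all
nodes), and the edge set is empty. -/
def Init (Si : Set S) (st : CState O S) : Prop :=
  st.queue.Nodup ∧
  (∀ o, o ∈ st.queue ↔ Adjacent inS outS Si o) ∧
  (∀ o, st.C o = Si ∩ inS o) ∧
  st.edges = ∅

/-- One construction step: dequeue `o`, compute `S_o = dir_Δ(o, C[o])`, add an
edge from `o` to every node adjacent to `S_o` other than `o`, add `S_o ∩ in(o')`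
to `C[o']` for all such nodes `o'`, enqueue them if absent, and reset `C[o]`. -/
def CStep (dirΔ : O → Set S → Set S) (st st' : CState O S) : Prop :=
  ∃ o q, st.queue = o :: q ∧
    st'.edges = st.edges ∪
      {p | p.1 = o ∧ p.2 ≠ o ∧ Adjacent inS outS (dirΔ o (st.C o)) p.2} ∧
    st'.C o = ∅ ∧
    (∀ o'', o'' ≠ o → st'.C o'' = st.C o'' ∪
        {x | x ∈ dirΔ o (st.C o) ∩ inS o'' ∧
          Adjacent inS outS (dirΔ o (st.C o)) o''}) ∧
    st'.queue.Nodup ∧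
    (∀ o', o' ∈ st'.queue ↔
      o' ∈ q ∨ (o' ≠ o ∧ Adjacent inS outS (dirΔ o (st.C o)) o'))

/-- A terminating (complete) execution of the construction in `n` steps. -/
def Exec (dirΔ : O → Set S → Set S) (Si : Set S)
    (f : ℕ → CState O S) (n : ℕ) : Prop :=
  Init inS outS Si (f 0) ∧
  (∀ k < n, CStep inS outS dirΔ (f k) (f (k + 1))) ∧
  (f n).queue = []

/-- The edge set contains a directed cycle (the construction aborts). -/
def HasCycle (E : Set (O × O)) : Prop :=
  ∃ v, Relation.TransGen (fun a b => (a, b) ∈ E) v v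

end

/-!
Call a pair `(P, U)` of a node set and an input assignment closed (`propagate … (P, U) ≤ (P, U)`)
if every node adjacent to `Si`, or to `dirΔ o (U o)` for some `o ∈ P`, lies in `P`, and `U`
contains every input slot reached in this way. By induction along a run, every state is bounded
by every closed pair. Conversely, the nodes processed in a terminating run, with `U o` the union
of the inputs `C[o]` that `o` had at its processing steps, form a closed pair: by union
monotonicity `dirΔ o (U o)` is the union of the outputs of the individual processing steps of
`o`, so everything it reaches was reached by the run. Hence every terminating run ends with the
edge set of the least closed pair, whatever the queue ordering; as edges are never removed, a
run is cycle-free throughout iff its final edge set is.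
-/

open Set

theorem monotone_of_map_sup {α β : Type*} [SemilatticeSup α] [SemilatticeSup β] {F : α → β}
    (h : ∀ a b, F a ⊔ F b = F (a ⊔ b)) : Monotone F := fun a b hab => by
  rw [← sup_eq_right.mpr hab, ← h]
  exact le_sup_left

theorem map_biUnion_finset_of_union_eq {α β ι : Type*} {F : Set α → Set β}
    (h : ∀ A B, F A ∪ F B = F (A ∪ B)) {s : Finset ι} (hs : s.Nonempty) (A : ι → Set α) :
    F (⋃ i ∈ s, A i) = ⋃ i ∈ s, F (A i) := by
  have := map_finset_sup' (SupHom.mk F fun A B => (h A B).symm) hs A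
  simpa [Finset.sup'_eq_sup, Finset.sup_set_eq_biUnion] using this

theorem HasCycle.mono {O : Type*} {E E' : Set (O × O)} (h : E ⊆ E') (hE : HasCycle E) :
    HasCycle E' :=
  let ⟨v, hv⟩ := hE
  ⟨v, Relation.TransGen.mono (fun _ _ hab => h hab) v v hv⟩

section Construction

variable {O S : Type*} {inS outS : O → Set S} {dirΔ : O → Set S → Set S}

theorem Adjacent.mono {X Y : Set S} {o : O} (h : X ⊆ Y) (ha : Adjacent inS outS X o) :
    Adjacent inS outS Y o :=
  Set.Nonempty.mono (inter_subset_inter_right _ h) ha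

namespace CStep

variable {st st' : CState O S} {o b : O} {q : List O}

theorem edges_subset (h : CStep inS outS dirΔ st st') : st.edges ⊆ st'.edges := by
  obtain ⟨o, q, -, he, -⟩ := h
  rw [he]
  exact subset_union_left

theorem mem_edges (h : CStep inS outS dirΔ st st') (hq : st.queue = o :: q) (hb : b ≠ o)
    (hadj : Adjacent inS outS (dirΔ o (st.C o)) b) : (o, b) ∈ st'.edges := by
  obtain ⟨o', q', hq', he, -⟩ := h
  obtain ⟨rfl, -⟩ := List.cons_eq_cons.mp (hq'.symm.trans hq)
  rw [he]
  exact Or.inr ⟨rfl, hb, hadj⟩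

theorem mem_queue (h : CStep inS outS dirΔ st st') (hq : st.queue = o :: q) (hb : b ≠ o)
    (hadj : Adjacent inS outS (dirΔ o (st.C o)) b) : b ∈ st'.queue := by
  obtain ⟨o', q', hq', -, -, -, -, hmem⟩ := h
  obtain ⟨rfl, -⟩ := List.cons_eq_cons.mp (hq'.symm.trans hq)
  exact (hmem b).mpr (Or.inr ⟨hb, hadj⟩)

theorem mem_queue_of_mem_tail (h : CStep inS outS dirΔ st st') (hq : st.queue = o :: q)
    (hb : b ∈ q) : b ∈ st'.queue := by
  obtain ⟨o', q', hq', -, -, -, -, hmem⟩ := h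
  obtain ⟨-, rfl⟩ := List.cons_eq_cons.mp (hq'.symm.trans hq)
  exact (hmem b).mpr (Or.inl hb)

theorem C_subset (h : CStep inS outS dirΔ st st') (hq : st.queue = o :: q) (hb : b ≠ o) :
    st.C b ⊆ st'.C b := by
  obtain ⟨o', q', hq', -, -, hC, -⟩ := h
  obtain ⟨rfl, -⟩ := List.cons_eq_cons.mp (hq'.symm.trans hq)
  rw [hC b hb]
  exact subset_union_left

theorem mem_C (h : CStep inS outS dirΔ st st') (hq : st.queue = o :: q) (hb : b ≠ o) {x : S}
    (hx : x ∈ dirΔ o (st.C o)) (hxb : x ∈ inS b) : x ∈ st'.C b := by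
  obtain ⟨o', q', hq', -, -, hC, -⟩ := h
  obtain ⟨rfl, -⟩ := List.cons_eq_cons.mp (hq'.symm.trans hq)
  rw [hC b hb]
  exact Or.inr ⟨⟨hx, hxb⟩, x, Or.inl hxb, hx⟩

end CStep

section Closure

variable (inS outS dirΔ) (Si : Set S)

def propagate (pu : Set O × (O → Set S)) : Set O × (O → Set S) :=
  ({o | Adjacent inS outS Si o ∨ ∃ o' ∈ pu.1, o' ≠ o ∧ Adjacent inS outS (dirΔ o' (pu.2 o')) o},
   fun o => {x | x ∈ inS o ∧ (x ∈ Si ∨ ∃ o' ∈ pu.1, o' ≠ o ∧ x ∈ dirΔ o' (pu.2 o'))})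

def leastClosed : Set O × (O → Set S) :=
  sInf {pu | propagate inS outS dirΔ Si pu ≤ pu}

def triggerEdges (pu : Set O × (O → Set S)) : Set (O × O) :=
  {p | p.1 ∈ pu.1 ∧ p.2 ≠ p.1 ∧ Adjacent inS outS (dirΔ p.1 (pu.2 p.1)) p.2}

variable {inS outS dirΔ Si}

theorem propagate_mono (hmono : ∀ o, Monotone (dirΔ o)) :
    Monotone (propagate inS outS dirΔ Si) := by
  rintro ⟨P, U⟩ ⟨P', U'⟩ ⟨hP, hU⟩
  refine ⟨?_, fun o => ?_⟩
  · rintro o (ho | ⟨o', ho', hne, hadj⟩)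
    · exact Or.inl ho
    · exact Or.inr ⟨o', hP ho', hne, hadj.mono (hmono o' (hU o'))⟩
  · rintro x ⟨hxo, hx | ⟨o', ho', hne, hx⟩⟩
    · exact ⟨hxo, Or.inl hx⟩
    · exact ⟨hxo, Or.inr ⟨o', hP ho', hne, hmono o' (hU o') hx⟩⟩

theorem propagate_leastClosed_le (hmono : ∀ o, Monotone (dirΔ o)) :
    propagate inS outS dirΔ Si (leastClosed inS outS dirΔ Si) ≤ leastClosed inS outS dirΔ Si :=
  le_sInf fun _ hpu => (propagate_mono hmono (sInf_le hpu)).trans hpu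

theorem triggerEdges_mono (hmono : ∀ o, Monotone (dirΔ o)) :
    Monotone (triggerEdges inS outS dirΔ) := by
  rintro ⟨P, U⟩ ⟨P', U'⟩ ⟨hP, hU⟩ ⟨a, b⟩ ⟨ha, hba, hadj⟩
  exact ⟨hP ha, hba, hadj.mono (hmono a (hU a))⟩

end Closure

open Classical in
noncomputable def processingSteps (f : ℕ → CState O S) (n : ℕ) (o : O) : Finset ℕ :=
  {k ∈ Finset.range n | ∃ q, (f k).queue = o :: q}

theorem mem_processingSteps {f : ℕ → CState O S} {n k : ℕ} {o : O} :
    k ∈ processingSteps f n o ↔ k < n ∧ ∃ q, (f k).queue = o :: q := by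
  simp [processingSteps]

noncomputable def trace (f : ℕ → CState O S) (n : ℕ) : Set O × (O → Set S) :=
  ({o | (processingSteps f n o).Nonempty}, fun o => ⋃ k ∈ processingSteps f n o, (f k).C o)

namespace Exec

variable {Si : Set S} {f : ℕ → CState O S} {n : ℕ}

theorem edges_mono (hf : Exec inS outS dirΔ Si f n) {k l : ℕ} (hkl : k ≤ l) (hl : l ≤ n) :
    (f k).edges ⊆ (f l).edges := by
  induction hkl with
  | refl => exact subset_rfl
  | step _ ih => exact (ih (by omega)).trans (hf.2.1 _ (by omega)).edges_subset

theorem exists_processingStep (hf : Exec inS outS dirΔ Si f n) {k : ℕ} (hk : k ≤ n) {a : O}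
    (ha : a ∈ (f k).queue) : ∃ j ∈ processingSteps f n a, (f k).C a ⊆ (f j).C a := by
  obtain ⟨d, hd⟩ : ∃ d, n - k = d := ⟨_, rfl⟩
  induction d generalizing k with
  | zero =>
    obtain rfl : k = n := by omega
    simp [hf.2.2] at ha
  | succ d ih =>
    have hkn : k < n := by omega
    obtain ⟨o, q, hq⟩ := List.exists_cons_of_ne_nil (List.ne_nil_of_mem ha)
    by_cases hao : a = o
    · subst hao
      exact ⟨k, mem_processingSteps.mpr ⟨hkn, q, hq⟩, subset_rfl⟩
    · have hstep := hf.2.1 k hkn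
      have ha' : a ∈ q := by
        rw [hq] at ha
        exact (List.mem_cons.mp ha).resolve_left hao
      obtain ⟨j, hj, hCj⟩ := ih hkn (hstep.mem_queue_of_mem_tail hq ha') (by omega)
      exact ⟨j, hj, (hstep.C_subset hq hao).trans hCj⟩

theorem mem_trace_of_mem_queue (hf : Exec inS outS dirΔ Si f n) {k : ℕ} (hk : k ≤ n) {a : O}
    (ha : a ∈ (f k).queue) : a ∈ (trace f n).1 :=
  let ⟨j, hj, _⟩ := hf.exists_processingStep hk ha
  ⟨j, hj⟩

theorem C_subset_trace (hf : Exec inS outS dirΔ Si f n) {k : ℕ} (hk : k ≤ n) {a : O}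
    (ha : a ∈ (f k).queue) : (f k).C a ⊆ (trace f n).2 a :=
  let ⟨j, hj, hCj⟩ := hf.exists_processingStep hk ha
  fun _ hx => mem_iUnion₂.mpr ⟨j, hj, hCj hx⟩

theorem exists_processingStep_of_mem_dirΔ (hum : ∀ o A B, dirΔ o A ∪ dirΔ o B = dirΔ o (A ∪ B))
    {o : O} (ho : o ∈ (trace f n).1) {x : S} (hx : x ∈ dirΔ o ((trace f n).2 o)) :
    ∃ k ∈ processingSteps f n o, x ∈ dirΔ o ((f k).C o) := by
  dsimp only [trace] at hx
  rw [map_biUnion_finset_of_union_eq (hum o) ho] at hx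
  simpa using hx

theorem propagate_trace_le (hum : ∀ o A B, dirΔ o A ∪ dirΔ o B = dirΔ o (A ∪ B))
    (hf : Exec inS outS dirΔ Si f n) : propagate inS outS dirΔ Si (trace f n) ≤ trace f n := by
  obtain ⟨-, hqueue₀, hC₀, -⟩ := hf.1
  refine ⟨?_, fun b x hx => ?_⟩
  · rintro b (hb | ⟨o, ho, hob, x, hxb, hx⟩)
    · exact hf.mem_trace_of_mem_queue n.zero_le ((hqueue₀ b).mpr hb)
    · obtain ⟨k, hk, hxk⟩ := exists_processingStep_of_mem_dirΔ hum ho hx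
      obtain ⟨hkn, q, hq⟩ := mem_processingSteps.mp hk
      exact hf.mem_trace_of_mem_queue hkn ((hf.2.1 k hkn).mem_queue hq hob.symm ⟨x, hxb, hxk⟩)
  · obtain ⟨hxb, hx | ⟨o, ho, hob, hx⟩⟩ := hx
    · refine hf.C_subset_trace n.zero_le ((hqueue₀ b).mpr ⟨x, Or.inl hxb, hx⟩) ?_
      rw [hC₀ b]
      exact ⟨hx, hxb⟩
    · obtain ⟨k, hk, hxk⟩ := exists_processingStep_of_mem_dirΔ hum ho hx
      obtain ⟨hkn, q, hq⟩ := mem_processingSteps.mp hk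
      have hstep := hf.2.1 k hkn
      exact hf.C_subset_trace hkn (hstep.mem_queue hq hob.symm ⟨x, Or.inl hxb, hxk⟩)
        (hstep.mem_C hq hob.symm hxk hxb)

theorem triggerEdges_trace_subset (hum : ∀ o A B, dirΔ o A ∪ dirΔ o B = dirΔ o (A ∪ B))
    (hf : Exec inS outS dirΔ Si f n) : triggerEdges inS outS dirΔ (trace f n) ⊆ (f n).edges := by
  rintro ⟨a, b⟩ ⟨ha, hba, x, hxb, hx⟩
  obtain ⟨k, hk, hxk⟩ := exists_processingStep_of_mem_dirΔ hum ha hx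
  obtain ⟨hkn, q, hq⟩ := mem_processingSteps.mp hk
  exact hf.edges_mono hkn le_rfl ((hf.2.1 k hkn).mem_edges hq hba ⟨x, hxb, hxk⟩)

theorem bounded_of_propagate_le (hmono : ∀ o, Monotone (dirΔ o))
    (hf : Exec inS outS dirΔ Si f n) {pu : Set O × (O → Set S)}
    (hpu : propagate inS outS dirΔ Si pu ≤ pu) {k : ℕ} (hk : k ≤ n) :
    (∀ o ∈ (f k).queue, o ∈ pu.1) ∧ (∀ o, (f k).C o ⊆ pu.2 o) ∧
      (f k).edges ⊆ triggerEdges inS outS dirΔ pu := by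
  induction k with
  | zero =>
    obtain ⟨-, hqueue₀, hC₀, hedges₀⟩ := hf.1
    refine ⟨fun o ho => hpu.1 (Or.inl ((hqueue₀ o).mp ho)), fun o x hx => hpu.2 o ?_, ?_⟩
    · rw [hC₀ o] at hx
      exact ⟨hx.2, Or.inl hx.1⟩
    · simp [hedges₀]
  | succ k ih =>
    obtain ⟨hQ, hC, hE⟩ := ih (by omega)
    obtain ⟨o, q, hq, he, hCo, hC', -, hmem⟩ := hf.2.1 k hk
    have ho : o ∈ pu.1 := hQ o (by simp [hq])
    have hdir : dirΔ o ((f k).C o) ⊆ dirΔ o (pu.2 o) := hmono o (hC o)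
    refine ⟨fun b hb => ?_, fun b => ?_, ?_⟩
    · rcases (hmem b).mp hb with hb | ⟨hbo, hadj⟩
      · exact hQ b (by simp [hq, hb])
      · exact hpu.1 (Or.inr ⟨o, ho, hbo.symm, hadj.mono hdir⟩)
    · by_cases hbo : b = o
      · rw [hbo, hCo]
        exact empty_subset _
      · rw [hC' b hbo]
        rintro x (hx | ⟨⟨hx, hxb⟩, -⟩)
        · exact hC b hx
        · exact hpu.2 b ⟨hxb, Or.inr ⟨o, ho, Ne.symm hbo, hdir hx⟩⟩
    · rw [he]
      rintro ⟨a, b⟩ (hab | ⟨rfl, hba, hadj⟩)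
      · exact hE hab
      · exact ⟨ho, hba, hadj.mono hdir⟩

theorem edges_eq_triggerEdges_leastClosed
    (hum : ∀ o A B, dirΔ o A ∪ dirΔ o B = dirΔ o (A ∪ B)) (hf : Exec inS outS dirΔ Si f n) :
    (f n).edges = triggerEdges inS outS dirΔ (leastClosed inS outS dirΔ Si) := by
  have hmono : ∀ o, Monotone (dirΔ o) := fun o => monotone_of_map_sup (hum o)
  refine (hf.bounded_of_propagate_le hmono (propagate_leastClosed_le hmono) le_rfl).2.2.antisymm ?_
  calc triggerEdges inS outS dirΔ (leastClosed inS outS dirΔ Si)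
      ⊆ triggerEdges inS outS dirΔ (trace f n) :=
        triggerEdges_mono hmono (sInf_le (propagate_trace_le hum hf))
    _ ⊆ (f n).edges := triggerEdges_trace_subset hum hf

theorem forall_not_hasCycle_iff (hf : Exec inS outS dirΔ Si f n) :
    (∀ k ≤ n, ¬ HasCycle (f k).edges) ↔ ¬ HasCycle (f n).edges :=
  ⟨fun h => h n le_rfl, fun h _ hk hc => h (hc.mono (hf.edges_mono hk le_rfl))⟩

end Exec

end Construction

/-- Under union monotonic `dir_Δ` functions, the dependency-graph construction
either terminates without aborting for every possible queue ordering, or aborts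
for every possible queue ordering: given two terminating executions for the
same eGDN and the same initially modified slots `Si`, one of them is cycle-free
throughout (non-aborting) if and only if the other one is. -/
theorem stmt10 {O S : Type*} (inS outS : O → Set S)
    (dirΔ : O → Set S → Set S)
    (hum : ∀ o A B, dirΔ o A ∪ dirΔ o B = dirΔ o (A ∪ B))
    (Si : Set S)
    (f g : ℕ → CState O S) (n m : ℕ)
    (hf : Exec inS outS dirΔ Si f n)
    (hg : Exec inS outS dirΔ Si g m) :
    ((∀ k ≤ n, ¬ HasCycle (f k).edges) ↔ (∀ k ≤ m, ¬ HasCycle (g k).edges)) := by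
  rw [hf.forall_not_hasCycle_iff, hg.forall_not_hasCycle_iff,
    hf.edges_eq_triggerEdges_leastClosed hum, hg.edges_eq_triggerEdges_leastClosed hum]
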